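/- arXiv:2312.02631 — 9 statements merged into one kernel-verified Lean document; each statement's English description precedes it below -/
import Mathlib

section
/- Let a, b > 0 with ab < 1. There exists a unique θ₀ ∈ (0, π/2) such that A sin(2θ₀ − 2τ) = μ + (1−μ) sin²θ₀ and 2A cos(2θ₀ − 2τ) = (1−μ) sin 2θ₀; it is characterized by cos 2θ₀ = ((1−μ) − 2A sin 2τ)/(1+μ) and sin 2θ₀ = 2A cos 2τ/(1+μ). -/
open MeasureTheory Real Set

noncomputable def fourierT (f : ℝ → ℂ) (ξ : ℝ) : ℂ :=
  (1 / Real.sqrt (2 * Real.pi) : ℝ) * ∫ x : ℝ, f x * Complex.exp (-(Complex.I * (ξ : ℂ) * (x : ℂ)))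

noncomputable def bargmann (f : ℝ → ℂ) (w : ℂ) : ℂ :=
  (Complex.exp (-w ^ 2 / 4) / (Real.sqrt Real.pi : ℂ)) *
    ∫ x : ℝ, Complex.exp ((x : ℂ) * w - (x : ℂ) ^ 2 / 2) * f x

def memE (a b : ℝ) (f : ℝ → ℂ) : Prop :=
  MeasureTheory.Integrable f ∧ ∃ C : ℝ,
    (∀ x : ℝ, ‖f x‖ ≤ C * Real.exp (-a * x ^ 2 / 2)) ∧
    (∀ ξ : ℝ, ‖fourierT f ξ‖ ≤ C * Real.exp (-b * ξ ^ 2 / 2))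

noncomputable def physHermite (n : ℕ) (x : ℝ) : ℝ :=
  (-1) ^ n * Real.exp (x ^ 2) * iteratedDeriv n (fun y => Real.exp (-y ^ 2)) x

noncomputable def hermiteFn (n : ℕ) (x : ℝ) : ℝ :=
  (Real.sqrt (2 ^ n * n.factorial * Real.sqrt Real.pi))⁻¹ * physHermite n x *
    Real.exp (-x ^ 2 / 2)

noncomputable def hermiteCoeff (f : ℝ → ℂ) (n : ℕ) : ℂ :=
  ∫ x : ℝ, f x * (hermiteFn n x : ℂ)

/-!
Substituting `a = (1 - μ)/(1 + μ)`, `b = (1 - ν)/(1 + ν)` gives `A² = p/q` and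
`A sin 2τ = (ν - μ)/q` with `p = μ + ν - 2μν`, `q = 2 - μ - ν`, hence the identity
`A² - (1 - μ) A sin 2τ = μ`. After `sin² θ = (1 - cos 2θ)/2`, the two equations are a linear
system in `(cos 2θ, sin 2θ)`, uniquely solvable thanks to this identity; its solution is the
stated pair, which lies on the unit circle (again by the identity) and has positive
second coordinate since `cos 2τ > 0`. Such a point is `(cos 2θ₀, sin 2θ₀)` for exactly one
`θ₀ ∈ (0, π/2)`.
-/

theorem existsUnique_mem_Ioo_cos_sin_two_mul {c s : ℝ} (h : c ^ 2 + s ^ 2 = 1) (hs : 0 < s) :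
    ∃! θ : ℝ, θ ∈ Ioo 0 (π / 2) ∧ cos (2 * θ) = c ∧ sin (2 * θ) = s := by
  have hc1 : c < 1 := by nlinarith
  have hc2 : -1 < c := by nlinarith
  have hφ0 : 0 < arccos c := arccos_pos.mpr hc1
  have hφπ : arccos c < π := arccos_lt_pi.mpr hc2
  have hcos : cos (arccos c) = c := cos_arccos hc2.le hc1.le
  have hsin : sin (arccos c) = s := by
    rw [sin_arccos, show 1 - c ^ 2 = s ^ 2 by linarith, sqrt_sq hs.le]
  refine ⟨arccos c / 2, ⟨⟨by linarith, by linarith⟩, ?_, ?_⟩, ?_⟩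
  · rwa [mul_div_cancel₀ _ two_ne_zero]
  · rwa [mul_div_cancel₀ _ two_ne_zero]
  · rintro θ ⟨⟨hθ0, hθ1⟩, hθc, -⟩
    have : 2 * θ = arccos c :=
      injOn_cos ⟨by linarith, by linarith⟩ ⟨hφ0.le, hφπ.le⟩ (hθc.trans hcos.symm)
    linarith

theorem sqrt_div_mul_div_sqrt_mul {p q : ℝ} (hp : 0 < p) (hq : 0 ≤ q) (x : ℝ) :
    √(p / q) * (x / √(p * q)) = x / q := by
  have hp' : √p ≠ 0 := (sqrt_pos.mpr hp).ne'
  rw [sqrt_div hp.le, sqrt_mul hp.le]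
  field_simp
  rw [sq_sqrt hq]

section

variable {A μ τ : ℝ} (hμ : 1 + μ ≠ 0) (hkey : A ^ 2 - (1 - μ) * (A * sin (2 * τ)) = μ)
include hμ hkey

theorem sq_add_sq_eq_one_of_key :
    (((1 - μ) - 2 * A * sin (2 * τ)) / (1 + μ)) ^ 2 + (2 * A * cos (2 * τ) / (1 + μ)) ^ 2 = 1 := by
  have := sin_sq_add_cos_sq (2 * τ)
  field_simp
  linear_combination (4 * A ^ 2) * this + 4 * hkey

theorem system_iff_cos_sin_two_mul (θ : ℝ) :
    (A * sin (2 * θ - 2 * τ) = μ + (1 - μ) * sin θ ^ 2 ∧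
        2 * A * cos (2 * θ - 2 * τ) = (1 - μ) * sin (2 * θ)) ↔
      (cos (2 * θ) = ((1 - μ) - 2 * A * sin (2 * τ)) / (1 + μ) ∧
        sin (2 * θ) = 2 * A * cos (2 * τ) / (1 + μ)) := by
  have hpy := sin_sq_add_cos_sq (2 * τ)
  have hsθ : sin θ ^ 2 = 1 / 2 - cos (2 * θ) / 2 := by rw [cos_two_mul, cos_sq']; ring
  rw [sin_sub, cos_sub, hsθ, eq_div_iff hμ, eq_div_iff hμ]
  constructor
  · -- Cramer's rule: the determinant of the system is `(1 + μ)² / 2` by `hkey`.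
    rintro ⟨E1, E2⟩
    constructor
    · refine mul_left_cancel₀ hμ ?_
      linear_combination (-4 * (A * sin (2 * τ) - (1 - μ) / 2)) * E1
        + (2 * A * cos (2 * τ)) * E2 + (-4 * cos (2 * θ) * A ^ 2) * hpy
        + (-4 * cos (2 * θ)) * hkey
    · refine mul_left_cancel₀ hμ ?_
      linear_combination (4 * A * cos (2 * τ)) * E1
        + (2 * (A * sin (2 * τ) - (1 - μ) / 2)) * E2 + (-4 * sin (2 * θ) * A ^ 2) * hpy
        + (-4 * sin (2 * θ)) * hkey
  · rintro ⟨hc, hs⟩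
    constructor
    · refine mul_left_cancel₀ hμ ?_
      linear_combination (A * cos (2 * τ)) * hs - (A * sin (2 * τ) - (1 - μ) / 2) * hc
        + (2 * A ^ 2) * hpy + 2 * hkey
    · refine mul_left_cancel₀ hμ ?_
      linear_combination (2 * A * cos (2 * τ)) * hc + (2 * A * sin (2 * τ) - (1 - μ)) * hs

end

theorem stmt3 (a b : ℝ) (ha : 0 < a) (hb : 0 < b) (hab : a * b < 1)
    (μ ν A τ : ℝ) (hμ : μ = (1 - a) / (1 + a)) (hν : ν = (1 - b) / (1 + b))
    (hA : A = Real.sqrt ((a + b - 2 * a * b) / (a + b + 2 * a * b)))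
    (hτ : τ ∈ Set.Ioo (-(π / 4)) (π / 4))
    (hτs : Real.sin (2 * τ)
      = (ν - μ) / Real.sqrt ((μ + ν - 2 * μ * ν) * (2 - μ - ν))) :
    (∃! θ₀ : ℝ, θ₀ ∈ Set.Ioo 0 (π / 2) ∧
      A * Real.sin (2 * θ₀ - 2 * τ) = μ + (1 - μ) * Real.sin θ₀ ^ 2 ∧
      2 * A * Real.cos (2 * θ₀ - 2 * τ) = (1 - μ) * Real.sin (2 * θ₀)) ∧
    ∀ θ₀ ∈ Set.Ioo 0 (π / 2),
      ((A * Real.sin (2 * θ₀ - 2 * τ) = μ + (1 - μ) * Real.sin θ₀ ^ 2 ∧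
        2 * A * Real.cos (2 * θ₀ - 2 * τ) = (1 - μ) * Real.sin (2 * θ₀)) ↔
       (Real.cos (2 * θ₀) = ((1 - μ) - 2 * A * Real.sin (2 * τ)) / (1 + μ) ∧
        Real.sin (2 * θ₀) = 2 * A * Real.cos (2 * τ) / (1 + μ))) := by
  have hD : 0 < (1 + a) * (1 + b) := by positivity
  have hP : 0 < a + b - 2 * a * b := by nlinarith [sq_nonneg (a - b), mul_pos ha hb]
  have hp : μ + ν - 2 * μ * ν = 2 * (a + b - 2 * a * b) / ((1 + a) * (1 + b)) := by
    rw [hμ, hν]; field_simp; ring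
  have hq : 2 - μ - ν = 2 * (a + b + 2 * a * b) / ((1 + a) * (1 + b)) := by
    rw [hμ, hν]; field_simp; ring
  have hq0 : 0 < 2 - μ - ν := by rw [hq]; positivity
  have hpq : 0 < (μ + ν - 2 * μ * ν) / (2 - μ - ν) := by rw [hp, hq]; positivity
  have hA' : A = √((μ + ν - 2 * μ * ν) / (2 - μ - ν)) := by
    rw [hA, hp, hq, div_div_div_cancel_right₀ hD.ne', mul_div_mul_left _ _ two_ne_zero]
  have hAsin : A * sin (2 * τ) = (ν - μ) / (2 - μ - ν) := by
    rw [hA', hτs]; exact sqrt_div_mul_div_sqrt_mul (by rw [hp]; positivity) hq0.le _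
  have hkey : A ^ 2 - (1 - μ) * (A * sin (2 * τ)) = μ := by
    rw [hAsin, hA', sq_sqrt hpq.le]; field_simp; ring
  have hμ1 : 0 < 1 + μ := by
    rw [hμ, show 1 + (1 - a) / (1 + a) = 2 / (1 + a) by field_simp; ring]; positivity
  have hApos : 0 < A := hA' ▸ sqrt_pos.mpr hpq
  have hcos : 0 < cos (2 * τ) := cos_pos_of_mem_Ioo ⟨by linarith [hτ.1], by linarith [hτ.2]⟩
  have hsys := system_iff_cos_sin_two_mul hμ1.ne' hkey
  refine ⟨(existsUnique_congr fun θ => and_congr_right fun _ => hsys θ).mpr ?_,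
    fun θ _ => hsys θ⟩
  exact existsUnique_mem_Ioo_cos_sin_two_mul (sq_add_sq_eq_one_of_key hμ1.ne' hkey) (by positivity)
end

section
/- Let a, b > 0 with ab < 1. Then θ₀ < τ + π/4 < θ₁. -/
open MeasureTheory Real Set

/-
Expanding `cos (2θ - 2τ)` with the defining relations of `θ₀` and `θ₁`, the terms in `A` cancel:
`cos (2θ₀ - 2τ) = (1 - μ) cos 2τ / (1 + μ) > 0` and `cos (2θ₁ - 2τ) = (ν - 1) cos 2τ / (1 + ν) < 0`,
because `μ, ν ∈ (-1, 1)` and `|2τ| < π/2`. As `2θ - 2τ ∈ (-π, 3π/2)`, the sign of its cosine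
places it below, respectively above, `π/2`.
-/

lemma one_sub_div_one_add_mem_Ioo {a : ℝ} (ha : 0 < a) : (1 - a) / (1 + a) ∈ Ioo (-1) 1 := by
  have h : 0 < 1 + a := by linarith
  constructor
  · rw [lt_div_iff₀ h]; linarith
  · rw [div_lt_iff₀ h]; linarith

lemma cos_sub_eq_of_cos_eq_of_sin_eq {x y c k d : ℝ}
    (hc : cos x = (c - k * sin y) / d) (hs : sin x = k * cos y / d) :
    cos (x - y) = c * cos y / d := by
  rw [cos_sub, hc, hs]
  ring

lemma lt_pi_div_two_of_cos_pos {x : ℝ} (hx : x ≤ π + π / 2) (hcos : 0 < cos x) : x < π / 2 := by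
  by_contra! h
  linarith [cos_nonpos_of_pi_div_two_le_of_le h hx]

lemma pi_div_two_lt_of_cos_neg {x : ℝ} (hx : -(π / 2) ≤ x) (hcos : cos x < 0) : π / 2 < x := by
  by_contra! h
  linarith [cos_nonneg_of_mem_Icc ⟨hx, h⟩]

theorem stmt5_general (a b : ℝ) (ha : 0 < a) (hb : 0 < b)
    (μ ν A τ θ₀ θ₁ : ℝ) (hμ : μ = (1 - a) / (1 + a)) (hν : ν = (1 - b) / (1 + b))
    (hτ : τ ∈ Set.Ioo (-(π / 4)) (π / 4))
    (hθ₀ : θ₀ ∈ Set.Ioo 0 (π / 2))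
    (hθ₀c : Real.cos (2 * θ₀) = ((1 - μ) - 2 * A * Real.sin (2 * τ)) / (1 + μ))
    (hθ₀s : Real.sin (2 * θ₀) = 2 * A * Real.cos (2 * τ) / (1 + μ))
    (hθ₁ : θ₁ ∈ Set.Ioo 0 (π / 2))
    (hθ₁c : Real.cos (2 * θ₁) = ((ν - 1) - 2 * A * Real.sin (2 * τ)) / (1 + ν))
    (hθ₁s : Real.sin (2 * θ₁) = 2 * A * Real.cos (2 * τ) / (1 + ν)) :
    θ₀ < τ + π / 4 ∧ τ + π / 4 < θ₁ := by
  obtain ⟨hμ₁, hμ₂⟩ := hμ ▸ one_sub_div_one_add_mem_Ioo ha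
  obtain ⟨hν₁, hν₂⟩ := hν ▸ one_sub_div_one_add_mem_Ioo hb
  have hcos2τ : 0 < cos (2 * τ) := cos_pos_of_mem_Ioo ⟨by linarith [hτ.1], by linarith [hτ.2]⟩
  have hcos₀ : 0 < cos (2 * θ₀ - 2 * τ) := by
    rw [cos_sub_eq_of_cos_eq_of_sin_eq hθ₀c hθ₀s]
    exact div_pos (mul_pos (by linarith) hcos2τ) (by linarith)
  have hcos₁ : cos (2 * θ₁ - 2 * τ) < 0 := by
    rw [cos_sub_eq_of_cos_eq_of_sin_eq hθ₁c hθ₁s]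
    exact div_neg_of_neg_of_pos (mul_neg_of_neg_of_pos (by linarith) hcos2τ) (by linarith)
  constructor
  · linarith [lt_pi_div_two_of_cos_pos (by linarith [hθ₀.2, hτ.1]) hcos₀]
  · linarith [pi_div_two_lt_of_cos_neg (by linarith [hθ₁.1, hτ.2]) hcos₁]

theorem stmt5 (a b : ℝ) (ha : 0 < a) (hb : 0 < b) (hab : a * b < 1)
    (μ ν A τ θ₀ θ₁ : ℝ) (hμ : μ = (1 - a) / (1 + a)) (hν : ν = (1 - b) / (1 + b))
    (hA : A = Real.sqrt ((a + b - 2 * a * b) / (a + b + 2 * a * b)))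
    (hτ : τ ∈ Set.Ioo (-(π / 4)) (π / 4))
    (hτs : Real.sin (2 * τ)
      = (ν - μ) / Real.sqrt ((μ + ν - 2 * μ * ν) * (2 - μ - ν)))
    (hθ₀ : θ₀ ∈ Set.Ioo 0 (π / 2))
    (hθ₀c : Real.cos (2 * θ₀) = ((1 - μ) - 2 * A * Real.sin (2 * τ)) / (1 + μ))
    (hθ₀s : Real.sin (2 * θ₀) = 2 * A * Real.cos (2 * τ) / (1 + μ))
    (hθ₁ : θ₁ ∈ Set.Ioo 0 (π / 2))
    (hθ₁c : Real.cos (2 * θ₁) = ((ν - 1) - 2 * A * Real.sin (2 * τ)) / (1 + ν))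
    (hθ₁s : Real.sin (2 * θ₁) = 2 * A * Real.cos (2 * τ) / (1 + ν)) :
    θ₀ < τ + π / 4 ∧ τ + π / 4 < θ₁ :=
  stmt5_general a b ha hb μ ν A τ θ₀ θ₁ hμ hν hτ hθ₀ hθ₀c hθ₀s hθ₁ hθ₁c hθ₁s
end

section
/- Let a > 0 and set μ = (1−a)/(1+a). If f : ℝ → ℂ is measurable and C ≥ 0 satisfies |f(x)| ≤ C e^{−a x²/2} for all x ∈ ℝ, then for all r ≥ 0 and θ ∈ ℝ, |Bf(r e^{iθ})| ≤ C √(2/(1+a)) exp((μ + (1−μ) sin²θ) r²/4). -/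
open MeasureTheory Real Set

/-!
The pointwise bound on `f` dominates the Bargmann integrand by the real Gaussian
`C e^{x Re w - (1+a) x²/2}`, whose integral `C √(2π/(1+a)) e^{(Re w)²/(2(1+a))}` is computed by
completing the square. With `|e^{-w²/4}| = e^{(Im² w - Re² w)/4}` the exponent becomes
`(Im² w + μ Re² w)/4`, which is `(μ + (1-μ) sin²θ) r²/4` at `w = r e^{iθ}`.
-/

lemma exp_mul_sub_mul_sq_eq {b : ℝ} (hb : b ≠ 0) (u x : ℝ) :
    rexp (u * x - b * x ^ 2) = rexp (u ^ 2 / (4 * b)) * rexp (-b * (x - u / (2 * b)) ^ 2) := by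
  rw [← Real.exp_add]
  congr 1
  field_simp
  ring

lemma integrable_exp_mul_sub_mul_sq {b : ℝ} (hb : 0 < b) (u : ℝ) :
    Integrable fun x : ℝ => rexp (u * x - b * x ^ 2) := by
  simp_rw [exp_mul_sub_mul_sq_eq hb.ne']
  exact ((integrable_exp_neg_mul_sq hb).comp_sub_right _).const_mul _

lemma integral_exp_mul_sub_mul_sq {b : ℝ} (hb : 0 < b) (u : ℝ) :
    ∫ x : ℝ, rexp (u * x - b * x ^ 2) = √(π / b) * rexp (u ^ 2 / (4 * b)) := by
  simp_rw [exp_mul_sub_mul_sq_eq hb.ne', integral_const_mul,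
    integral_sub_right_eq_self (fun y : ℝ => rexp (-b * y ^ 2)), integral_gaussian]
  ring

lemma norm_integral_le_of_norm_le_exp_quadratic {E : Type*} [NormedAddCommGroup E]
    [NormedSpace ℝ E] {g : ℝ → E} {b u C : ℝ} (hb : 0 < b)
    (hg : ∀ x, ‖g x‖ ≤ C * rexp (u * x - b * x ^ 2)) :
    ‖∫ x, g x‖ ≤ C * (√(π / b) * rexp (u ^ 2 / (4 * b))) :=
  calc ‖∫ x, g x‖ ≤ ∫ x, ‖g x‖ := norm_integral_le_integral_norm g
    _ ≤ ∫ x, C * rexp (u * x - b * x ^ 2) :=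
      integral_mono_of_nonneg (.of_forall fun x => norm_nonneg _)
        ((integrable_exp_mul_sub_mul_sq hb u).const_mul C) (.of_forall hg)
    _ = C * (√(π / b) * rexp (u ^ 2 / (4 * b))) := by
      rw [integral_const_mul, integral_exp_mul_sub_mul_sq hb]

lemma norm_cexp_mul_sub_sq_div_two (x : ℝ) (w : ℂ) :
    ‖Complex.exp (x * w - x ^ 2 / 2)‖ = rexp (w.re * x - x ^ 2 / 2) := by
  rw [Complex.norm_exp]
  congr 1
  simp [pow_two, mul_comm]

lemma norm_cexp_neg_sq_div_four (w : ℂ) :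
    ‖Complex.exp (-w ^ 2 / 4)‖ = rexp ((w.im ^ 2 - w.re ^ 2) / 4) := by
  rw [Complex.norm_exp]
  congr 1
  simp [pow_two]

theorem norm_bargmann_le {a C : ℝ} (ha : -1 < a) {f : ℝ → ℂ}
    (hbd : ∀ x, ‖f x‖ ≤ C * rexp (-a * x ^ 2 / 2)) (w : ℂ) :
    ‖bargmann f w‖ ≤
      C * √(2 / (1 + a)) * rexp ((w.im ^ 2 + (1 - a) / (1 + a) * w.re ^ 2) / 4) := by
  have ha' : 0 < 1 + a := by linarith
  have hkernel : ∀ x : ℝ, ‖Complex.exp (x * w - x ^ 2 / 2) * f x‖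
      ≤ C * rexp (w.re * x - (1 + a) / 2 * x ^ 2) := fun x => by
    calc ‖Complex.exp (x * w - x ^ 2 / 2) * f x‖
        ≤ rexp (w.re * x - x ^ 2 / 2) * (C * rexp (-a * x ^ 2 / 2)) := by
          rw [norm_mul, norm_cexp_mul_sub_sq_div_two]
          exact mul_le_mul_of_nonneg_left (hbd x) (Real.exp_nonneg _)
      _ = C * rexp (w.re * x - (1 + a) / 2 * x ^ 2) := by
          rw [mul_left_comm, ← Real.exp_add]
          ring_nf
  have hintegral := norm_integral_le_of_norm_le_exp_quadratic (by positivity) hkernel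
  have hsqrt : √(π / ((1 + a) / 2)) = √π * √(2 / (1 + a)) := by
    rw [← Real.sqrt_mul Real.pi_nonneg]
    congr 1
    field_simp
  have hexp : rexp ((w.im ^ 2 - w.re ^ 2) / 4) * rexp (w.re ^ 2 / (4 * ((1 + a) / 2)))
      = rexp ((w.im ^ 2 + (1 - a) / (1 + a) * w.re ^ 2) / 4) := by
    rw [← Real.exp_add]
    congr 1
    field_simp
    ring
  rw [bargmann, norm_mul, norm_div, norm_cexp_neg_sq_div_four, Complex.norm_real,
    Real.norm_of_nonneg (Real.sqrt_nonneg _)]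
  calc rexp ((w.im ^ 2 - w.re ^ 2) / 4) / √π * ‖∫ x : ℝ, Complex.exp (x * w - x ^ 2 / 2) * f x‖
      ≤ rexp ((w.im ^ 2 - w.re ^ 2) / 4) / √π *
          (C * (√(π / ((1 + a) / 2)) * rexp (w.re ^ 2 / (4 * ((1 + a) / 2))))) :=
        mul_le_mul_of_nonneg_left hintegral (by positivity)
    _ = C * √(2 / (1 + a)) * rexp ((w.im ^ 2 + (1 - a) / (1 + a) * w.re ^ 2) / 4) := by
        have : 0 < √π := Real.sqrt_pos.mpr Real.pi_pos
        rw [hsqrt, ← hexp]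
        field_simp

theorem stmt7_general (a : ℝ) (ha : 0 < a) (μ : ℝ) (hμ : μ = (1 - a) / (1 + a))
    (f : ℝ → ℂ) (C : ℝ)
    (hbd : ∀ x : ℝ, ‖f x‖ ≤ C * Real.exp (-a * x ^ 2 / 2)) :
    ∀ r θ : ℝ, 0 ≤ r →
      ‖bargmann f ((r : ℂ) * Complex.exp ((θ : ℂ) * Complex.I))‖ ≤
        C * Real.sqrt (2 / (1 + a)) *
          Real.exp ((μ + (1 - μ) * Real.sin θ ^ 2) * r ^ 2 / 4) := by
  intro r θ _
  convert norm_bargmann_le (by linarith) hbd ((r : ℂ) * Complex.exp ((θ : ℂ) * Complex.I))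
    using 3
  simp only [Complex.re_ofReal_mul, Complex.im_ofReal_mul, Complex.exp_ofReal_mul_I_re,
    Complex.exp_ofReal_mul_I_im, hμ]
  rw [mul_pow, mul_pow, cos_sq']
  ring

theorem stmt7 (a : ℝ) (ha : 0 < a) (μ : ℝ) (hμ : μ = (1 - a) / (1 + a))
    (f : ℝ → ℂ) (hf : Measurable f) (C : ℝ) (hC : 0 ≤ C)
    (hbd : ∀ x : ℝ, ‖f x‖ ≤ C * Real.exp (-a * x ^ 2 / 2)) :
    ∀ r θ : ℝ, 0 ≤ r →
      ‖bargmann f ((r : ℂ) * Complex.exp ((θ : ℂ) * Complex.I))‖ ≤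
        C * Real.sqrt (2 / (1 + a)) *
          Real.exp ((μ + (1 - μ) * Real.sin θ ^ 2) * r ^ 2 / 4) :=
  stmt7_general a ha μ hμ f C hbd
end

section
/- For every Schwartz function f on ℝ and every w ∈ ℂ, B(Ff)(w) = Bf(−iw); equivalently, Bf(w) = B(Ff)(iw). -/
open MeasureTheory Real Set

/-! Write `B(Ff)(w)` as a double integral and swap the order of integration (the Gaussian weight
and `f` are integrable). The inner integral over `ξ` is the Gaussian
`∫ exp (ξ (w - i x) - ξ² / 2) dξ = √(2π) exp ((w - i x)² / 2)`, and completing the square,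
`(w - i x)² / 2 = w² / 2 + (x (-i w) - x² / 2)`, leaves `Bf(-i w)`. The second identity is the
first one at `i w`. -/

section
open Complex

theorem integrable_cexp_mul_sub_sq_div_two (c : ℂ) :
    Integrable fun ξ : ℝ => cexp (ξ * c - ξ ^ 2 / 2) := by
  convert integrable_cexp_quadratic (b := 1 / 2) (by norm_num) c 0 using 2 with ξ
  ring_nf

theorem integral_cexp_mul_sub_sq_div_two (c : ℂ) :
    ∫ ξ : ℝ, cexp (ξ * c - ξ ^ 2 / 2) = √(2 * π) * cexp (c ^ 2 / 2) := by
  convert integral_cexp_quadratic (b := -(1 / 2)) (by norm_num) c 0 using 2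
  · ext ξ; ring_nf
  · rw [show (π : ℂ) / -(-(1 / 2)) = ((2 * π : ℝ) : ℂ) by push_cast; ring, Real.sqrt_eq_rpow,
      ofReal_cpow two_pi_pos.le]
    norm_num
  · ring_nf

variable {f : ℝ → ℂ}

theorem integrable_uncurry_gaussian_mul_fourier_kernel (hf : Integrable f) (w : ℂ) :
    Integrable (Function.uncurry fun ξ x : ℝ =>
      cexp (ξ * w - ξ ^ 2 / 2) * (f x * cexp (-(I * ξ * x)))) (volume.prod volume) := by
  have hmeas : AEStronglyMeasurable (Function.uncurry fun ξ x : ℝ =>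
      cexp (ξ * w - ξ ^ 2 / 2) * (f x * cexp (-(I * ξ * x)))) (volume.prod volume) := by
    exact (Continuous.aestronglyMeasurable (by fun_prop)).mul
      (hf.aestronglyMeasurable.comp_snd.mul (Continuous.aestronglyMeasurable (by fun_prop)))
  refine ((integrable_cexp_mul_sub_sq_div_two w).norm.mul_prod hf.norm).mono' hmeas
    (ae_of_all _ fun ⟨ξ, x⟩ => ?_)
  have hkernel : ‖cexp (-(I * ξ * x))‖ = 1 := by
    rw [show -(I * ξ * x) = ((-(ξ * x) : ℝ) : ℂ) * I by push_cast; ring, norm_exp_ofReal_mul_I]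
  simp only [Function.uncurry_apply_pair, norm_mul, hkernel, mul_one, le_refl]

theorem integral_gaussian_mul_integral_fourier_kernel (hf : Integrable f) (w : ℂ) :
    ∫ ξ : ℝ, cexp (ξ * w - ξ ^ 2 / 2) * ∫ x : ℝ, f x * cexp (-(I * ξ * x)) =
      √(2 * π) * cexp (w ^ 2 / 2) * ∫ x : ℝ, cexp (x * (-I * w) - x ^ 2 / 2) * f x := by
  calc _ = ∫ ξ : ℝ, ∫ x : ℝ, cexp (ξ * w - ξ ^ 2 / 2) * (f x * cexp (-(I * ξ * x))) := by
        simp_rw [integral_const_mul]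
    _ = ∫ x : ℝ, ∫ ξ : ℝ, cexp (ξ * w - ξ ^ 2 / 2) * (f x * cexp (-(I * ξ * x))) :=
        integral_integral_swap (integrable_uncurry_gaussian_mul_fourier_kernel hf w)
    _ = ∫ x : ℝ, f x * (√(2 * π) * cexp ((w - I * x) ^ 2 / 2)) := by
        congr with x
        rw [← integral_cexp_mul_sub_sq_div_two, ← integral_const_mul]
        congr with ξ
        rw [mul_left_comm, ← Complex.exp_add]
        congr 2
        ring
    _ = _ := by
        rw [← integral_const_mul]
        congr with x
        have hsq : (w - I * x) ^ 2 / 2 = w ^ 2 / 2 + (x * (-I * w) - x ^ 2 / 2) := by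
          linear_combination (x ^ 2 / 2 : ℂ) * I_sq
        rw [hsq, Complex.exp_add]
        ring

theorem bargmann_fourierT (hf : Integrable f) (w : ℂ) :
    bargmann (fourierT f) w = bargmann f (-I * w) := by
  have hexp : -(-I * w) ^ 2 / 4 = -w ^ 2 / 4 + w ^ 2 / 2 := by
    linear_combination (-w ^ 2 / 4) * I_sq
  simp only [bargmann, fourierT, mul_left_comm _ ((1 / √(2 * π) : ℝ) : ℂ), integral_const_mul,
    integral_gaussian_mul_integral_fourier_kernel hf, hexp, Complex.exp_add]
  have hsqrt : (√(2 * π) : ℂ) ≠ 0 := by exact_mod_cast (by positivity : √(2 * π) ≠ 0)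
  push_cast
  field_simp

end

theorem stmt8 (f : SchwartzMap ℝ ℂ) (w : ℂ) :
    bargmann (fourierT ⇑f) w = bargmann ⇑f (-Complex.I * w) ∧
    bargmann ⇑f w = bargmann (fourierT ⇑f) (Complex.I * w) := by
  refine ⟨bargmann_fourierT f.integrable w, ?_⟩
  rw [bargmann_fourierT f.integrable, ← mul_assoc, neg_mul, Complex.I_mul_I, neg_neg, one_mul]
end

section
/- Let a, b > 0 with ab < 1, set ν = (1−b)/(1+b), and let f ∈ E(a,b) with constant C, so that |Ff(ξ)| ≤ C e^{−b ξ²/2} for all ξ ∈ ℝ. Then for all r ≥ 0 and θ ∈ ℝ, |Bf(r e^{iθ})| ≤ C √(2/(1+b)) exp((ν + (1−ν) cos²θ) r²/4). -/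
open MeasureTheory Real Set

/-!
Fubini and the Fourier transform of a Gaussian give
`∫ f(x) e^{xw - x²/2} dx = e^{w²/2} ∫ Ff(ξ) e^{-ξ²/2 + iwξ} dξ`.
Inserting `|Ff(ξ)| ≤ C e^{-bξ²/2}` leaves the real Gaussian integral
`∫ e^{-(1+b)ξ²/2 - (Im w) ξ} dξ = √(2π/(1+b)) e^{(Im w)²/(2(1+b))}`, and for `w = r e^{iθ}`
one has `Re(w²)/4 + (Im w)²/(2(1+b)) = (ν + (1-ν) cos²θ) r²/4`.
-/

open scoped Complex
open Complex (I)

theorem integrable_cexp_neg_mul_sq_div_two_add {c : ℝ} (hc : 0 < c) (z : ℂ) :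
    Integrable fun ξ : ℝ => cexp (-c * ξ ^ 2 / 2 + z * ξ) := by
  convert integrable_cexp_quadratic (b := (c / 2 : ℂ)) (by simpa using hc) z 0 using 3 with ξ
  ring

theorem integral_cexp_neg_mul_sq_div_two_add {c : ℝ} (hc : 0 < c) (z : ℂ) :
    ∫ ξ : ℝ, cexp (-c * ξ ^ 2 / 2 + z * ξ) = √(2 * π / c) * cexp (z ^ 2 / (2 * c)) := by
  have hsqrt : ((2 * π / c : ℝ) : ℂ) ^ (1 / 2 : ℂ) = √(2 * π / c) := by
    rw [← Complex.ofReal_ofNat, ← Complex.ofReal_one, ← Complex.ofReal_div,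
      ← Complex.ofReal_cpow (by positivity), sqrt_eq_rpow]
  convert integral_cexp_quadratic (b := -(c / 2 : ℂ)) (by simpa using hc) z 0 using 2
  · ext ξ; congr 1; ring
  · rw [← hsqrt]; push_cast; congr 1; field_simp
  · congr 1; field_simp; ring

theorem integrable_rexp_neg_mul_sq_div_two_add {c : ℝ} (hc : 0 < c) (s : ℝ) :
    Integrable fun ξ : ℝ => rexp (-c * ξ ^ 2 / 2 + s * ξ) := by
  convert (integrable_cexp_neg_mul_sq_div_two_add hc s).norm using 2 with ξ
  rw [Complex.norm_exp]
  norm_cast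

theorem integral_rexp_neg_mul_sq_div_two_add {c : ℝ} (hc : 0 < c) (s : ℝ) :
    ∫ ξ : ℝ, rexp (-c * ξ ^ 2 / 2 + s * ξ) = √(2 * π / c) * rexp (s ^ 2 / (2 * c)) := by
  apply Complex.ofReal_injective
  rw [← integral_complex_ofReal]
  push_cast
  exact integral_cexp_neg_mul_sq_div_two_add hc s

theorem norm_cexp_neg_sq_div_two_add_I_mul (w : ℂ) (ξ : ℝ) :
    ‖cexp (-ξ ^ 2 / 2 + I * w * ξ)‖ = rexp (-1 * ξ ^ 2 / 2 + -w.im * ξ) := by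
  rw [Complex.norm_exp]
  congr 1
  simp [Complex.mul_re, pow_two]

theorem integral_fourier_kernel_mul_gaussian (w : ℂ) (x : ℝ) :
    ∫ ξ : ℝ, cexp (-(I * ξ * x)) * cexp (-ξ ^ 2 / 2 + I * w * ξ)
      = √(2 * π) * cexp (-(w - x) ^ 2 / 2) := by
  have h := integral_cexp_neg_mul_sq_div_two_add one_pos (I * (w - x))
  simp only [Complex.ofReal_one, div_one, mul_one, mul_pow, Complex.I_sq] at h
  simp_rw [← Complex.exp_add]
  convert h using 3 with ξ
  · congr 1; ring
  · ring

theorem integrable_fourier_kernel_mul_gaussian_prod {f : ℝ → ℂ} (hf : Integrable f) (w : ℂ) :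
    Integrable (fun p : ℝ × ℝ => f p.2 * cexp (-(I * p.1 * p.2)) * cexp (-p.1 ^ 2 / 2 + I * w * p.1))
      (volume.prod volume) := by
  refine ((integrable_rexp_neg_mul_sq_div_two_add one_pos (-w.im)).mul_prod hf.norm).mono' ?_ ?_
  · exact (hf.1.comp_snd.mul (by fun_prop)).mul (by fun_prop)
  · refine Filter.Eventually.of_forall fun p => le_of_eq ?_
    rw [norm_mul, norm_mul, norm_cexp_neg_sq_div_two_add_I_mul, Complex.norm_exp]
    simp [mul_comm]

theorem integral_fourierT_mul_gaussian {f : ℝ → ℂ} (hf : Integrable f) (w : ℂ) :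
    ∫ ξ : ℝ, fourierT f ξ * cexp (-ξ ^ 2 / 2 + I * w * ξ)
      = ∫ x : ℝ, f x * cexp (-(w - x) ^ 2 / 2) := by
  have hsqrt : ((1 / √(2 * π) : ℝ) : ℂ) * √(2 * π) = 1 := by
    rw [← Complex.ofReal_mul, one_div_mul_cancel (by positivity), Complex.ofReal_one]
  calc ∫ ξ : ℝ, fourierT f ξ * cexp (-ξ ^ 2 / 2 + I * w * ξ)
      = ((1 / √(2 * π) : ℝ) : ℂ) * ∫ ξ : ℝ, ∫ x : ℝ,
          f x * cexp (-(I * ξ * x)) * cexp (-ξ ^ 2 / 2 + I * w * ξ) := by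
        simp_rw [fourierT, mul_assoc, integral_const_mul, ← integral_mul_const, mul_assoc]
    _ = ((1 / √(2 * π) : ℝ) : ℂ) * ∫ x : ℝ, f x * ∫ ξ : ℝ,
          cexp (-(I * ξ * x)) * cexp (-ξ ^ 2 / 2 + I * w * ξ) := by
        rw [integral_integral_swap (integrable_fourier_kernel_mul_gaussian_prod hf w)]
        simp_rw [mul_assoc, integral_const_mul]
    _ = ∫ x : ℝ, f x * cexp (-(w - x) ^ 2 / 2) := by
        simp_rw [integral_fourier_kernel_mul_gaussian, ← integral_const_mul]
        congr 1 with x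
        linear_combination (f x * cexp (-(w - x) ^ 2 / 2)) * hsqrt

theorem bargmann_eq_integral_fourierT {f : ℝ → ℂ} (hf : Integrable f) (w : ℂ) :
    bargmann f w
      = cexp (w ^ 2 / 4) / √π * ∫ ξ : ℝ, fourierT f ξ * cexp (-ξ ^ 2 / 2 + I * w * ξ) := by
  have hkernel (x : ℝ) :
      cexp (x * w - x ^ 2 / 2) * f x = cexp (w ^ 2 / 2) * (f x * cexp (-(w - x) ^ 2 / 2)) := by
    rw [mul_left_comm, ← Complex.exp_add]
    ring_nf
  simp_rw [bargmann, hkernel, integral_const_mul, integral_fourierT_mul_gaussian hf, ← mul_assoc]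
  rw [div_mul_eq_mul_div, ← Complex.exp_add]
  ring_nf

theorem norm_bargmann_le_s9 {f : ℝ → ℂ} (hf : Integrable f) {b C : ℝ} (hb : 0 < 1 + b)
    (hFf : ∀ ξ : ℝ, ‖fourierT f ξ‖ ≤ C * rexp (-b * ξ ^ 2 / 2)) (w : ℂ) :
    ‖bargmann f w‖ ≤ C * √(2 / (1 + b)) * rexp ((w ^ 2).re / 4 + w.im ^ 2 / (2 * (1 + b))) := by
  have hintegrand (ξ : ℝ) : ‖fourierT f ξ * cexp (-ξ ^ 2 / 2 + I * w * ξ)‖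
      ≤ C * rexp (-(1 + b) * ξ ^ 2 / 2 + -w.im * ξ) := by
    rw [norm_mul, norm_cexp_neg_sq_div_two_add_I_mul]
    calc ‖fourierT f ξ‖ * rexp (-1 * ξ ^ 2 / 2 + -w.im * ξ)
        ≤ C * rexp (-b * ξ ^ 2 / 2) * rexp (-1 * ξ ^ 2 / 2 + -w.im * ξ) := by gcongr; exact hFf ξ
      _ = C * rexp (-(1 + b) * ξ ^ 2 / 2 + -w.im * ξ) := by
        rw [mul_assoc, ← Real.exp_add]; ring_nf
  have hintegral : ‖∫ ξ : ℝ, fourierT f ξ * cexp (-ξ ^ 2 / 2 + I * w * ξ)‖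
      ≤ C * (√π * √(2 / (1 + b)) * rexp (w.im ^ 2 / (2 * (1 + b)))) := by
    refine (norm_integral_le_of_norm_le
      ((integrable_rexp_neg_mul_sq_div_two_add hb _).const_mul C)
      (Filter.Eventually.of_forall hintegrand)).trans_eq ?_
    rw [integral_const_mul, integral_rexp_neg_mul_sq_div_two_add hb, neg_sq, ← sqrt_mul pi_pos.le]
    ring_nf
  rw [bargmann_eq_integral_fourierT hf, norm_mul, norm_div, Complex.norm_exp, Complex.norm_real,
    norm_of_nonneg (sqrt_nonneg π)]
  calc rexp ((w ^ 2 / 4).re) / √π * ‖∫ ξ : ℝ, fourierT f ξ * cexp (-ξ ^ 2 / 2 + I * w * ξ)‖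
      ≤ rexp ((w ^ 2 / 4).re) / √π
          * (C * (√π * √(2 / (1 + b)) * rexp (w.im ^ 2 / (2 * (1 + b))))) := by
        gcongr
    _ = C * √(2 / (1 + b)) * rexp ((w ^ 2).re / 4 + w.im ^ 2 / (2 * (1 + b))) := by
        have hπ : √π ≠ 0 := by positivity
        rw [Complex.div_ofNat_re, Real.exp_add]
        field_simp

theorem stmt9_general (b : ℝ) (hb : 0 < b)
    (ν : ℝ) (hν : ν = (1 - b) / (1 + b))
    (f : ℝ → ℂ) (hfi : MeasureTheory.Integrable f) (C : ℝ)
    (hfb : ∀ ξ : ℝ, ‖fourierT f ξ‖ ≤ C * Real.exp (-b * ξ ^ 2 / 2)) :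
    ∀ r θ : ℝ, 0 ≤ r →
      ‖bargmann f ((r : ℂ) * Complex.exp ((θ : ℂ) * Complex.I))‖ ≤
        C * Real.sqrt (2 / (1 + b)) *
          Real.exp ((ν + (1 - ν) * Real.cos θ ^ 2) * r ^ 2 / 4) := by
  intro r θ _
  have hb1 : 0 < 1 + b := by linarith
  have hsq : (((r : ℂ) * cexp (θ * I)) ^ 2).re = r ^ 2 * (2 * cos θ ^ 2 - 1) := by
    rw [mul_pow, ← Complex.exp_nat_mul, ← Complex.ofReal_pow, Complex.re_ofReal_mul,
      ← cos_two_mul, ← Complex.exp_ofReal_mul_I_re]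
    push_cast
    ring_nf
  have him : ((r : ℂ) * cexp (θ * I)).im = r * sin θ := by
    simp
  refine (norm_bargmann_le_s9 hfi hb1 hfb _).trans_eq ?_
  rw [hsq, him, hν, mul_pow, sin_sq]
  congr 2
  field_simp
  ring

theorem stmt9 (a b : ℝ) (ha : 0 < a) (hb : 0 < b) (hab : a * b < 1)
    (ν : ℝ) (hν : ν = (1 - b) / (1 + b))
    (f : ℝ → ℂ) (hfi : MeasureTheory.Integrable f) (C : ℝ)
    (hfa : ∀ x : ℝ, ‖f x‖ ≤ C * Real.exp (-a * x ^ 2 / 2))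
    (hfb : ∀ ξ : ℝ, ‖fourierT f ξ‖ ≤ C * Real.exp (-b * ξ ^ 2 / 2)) :
    ∀ r θ : ℝ, 0 ≤ r →
      ‖bargmann f ((r : ℂ) * Complex.exp ((θ : ℂ) * Complex.I))‖ ≤
        C * Real.sqrt (2 / (1 + b)) *
          Real.exp ((ν + (1 - ν) * Real.cos θ ^ 2) * r ^ 2 / 4) :=
  stmt9_general b hb ν hν f hfi C hfb
end

section
/- Let τ ∈ (−π/4, π/4) and let α, β satisfy 0 ≤ α < τ + π/4 < β ≤ π/2. Then there exists a constant C > 0 such that for every integer n ≥ 1, ∫_α^β exp((n/2) sin(2t − 2τ)) dt ≤ C n^{−1/2} e^{n/2}. -/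
open MeasureTheory Real Set

/-!
Writing `t₀ = τ + π / 4`, the integrand is `exp ((n / 2) cos (2 (t - t₀)))`. On the range
`|t - t₀| ≤ π / 2` the bound `cos y ≤ 1 - 2 y² / π²` (for `|y| ≤ π`) dominates it by
`e^{n/2}` times the Gaussian `exp (-(4 n / π²) (t - t₀)²)`, whose integral over all of `ℝ` is
`√(π³ / (4 n)) = (π √π / 2) n^{-1/2}`.
-/

lemma cos_two_mul_le_one_sub_mul_sq {u : ℝ} (hu : |u| ≤ π / 2) :
    cos (2 * u) ≤ 1 - 8 / π ^ 2 * u ^ 2 := by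
  convert cos_le_one_sub_mul_cos_sq (x := 2 * u) (by rw [abs_mul, abs_two]; linarith) using 1
  ring

lemma intervalIntegral_exp_neg_mul_sub_sq_le {b : ℝ} (hb : 0 < b) (t₀ : ℝ) {α β : ℝ}
    (hαβ : α ≤ β) : ∫ t in α..β, exp (-b * (t - t₀) ^ 2) ≤ √(π / b) := by
  rw [intervalIntegral.integral_of_le hαβ, ← integral_gaussian b,
    ← integral_sub_right_eq_self (fun x => exp (-b * x ^ 2)) t₀]
  exact setIntegral_le_integral ((integrable_exp_neg_mul_sq hb).comp_sub_right t₀)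
    (Filter.Eventually.of_forall fun _ => (exp_pos _).le)

lemma exp_mul_sin_le_exp_mul_gaussian {x τ t : ℝ} (hx : 0 ≤ x)
    (ht : |t - (τ + π / 4)| ≤ π / 2) :
    exp (x / 2 * sin (2 * t - 2 * τ)) ≤
      exp (x / 2) * exp (-(4 * x / π ^ 2) * (t - (τ + π / 4)) ^ 2) := by
  have hsin : sin (2 * t - 2 * τ) = cos (2 * (t - (τ + π / 4))) := by
    rw [← cos_sub_pi_div_two]; ring_nf
  have hcos := mul_le_mul_of_nonneg_left (cos_two_mul_le_one_sub_mul_sq ht)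
    (by positivity : 0 ≤ x / 2)
  rw [hsin, ← exp_add, exp_le_exp]
  exact hcos.trans_eq (by ring)

lemma sqrt_pi_div_four_mul_div_sq {x : ℝ} (hx : 0 < x) :
    √(π / (4 * x / π ^ 2)) = π * √π / 2 * x ^ (-(1 : ℝ) / 2) := by
  rw [show π / (4 * x / π ^ 2) = (π * √π / 2) ^ 2 / x by
      field_simp; rw [sq_sqrt pi_pos.le]; ring,
    sqrt_div' _ hx.le, sqrt_sq (by positivity), div_eq_mul_inv, neg_div, rpow_neg hx.le,
    ← sqrt_eq_rpow]

theorem intervalIntegral_exp_mul_sin_le {τ α β x : ℝ} (hx : 0 < x) (hαβ : α ≤ β)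
    (hα : τ - π / 4 ≤ α) (hβ : β ≤ τ + 3 * π / 4) :
    ∫ t in α..β, exp (x / 2 * sin (2 * t - 2 * τ)) ≤
      π * √π / 2 * x ^ (-(1 : ℝ) / 2) * exp (x / 2) := by
  calc ∫ t in α..β, exp (x / 2 * sin (2 * t - 2 * τ))
      ≤ ∫ t in α..β, exp (x / 2) * exp (-(4 * x / π ^ 2) * (t - (τ + π / 4)) ^ 2) :=
        intervalIntegral.integral_mono_on hαβ
          (Continuous.intervalIntegrable (by fun_prop) _ _)
          (Continuous.intervalIntegrable (by fun_prop) _ _) fun t ht =>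
          exp_mul_sin_le_exp_mul_gaussian hx.le
            (abs_le.2 ⟨by linarith [ht.1], by linarith [ht.2]⟩)
    _ = exp (x / 2) * ∫ t in α..β, exp (-(4 * x / π ^ 2) * (t - (τ + π / 4)) ^ 2) :=
        intervalIntegral.integral_const_mul _ _
    _ ≤ exp (x / 2) * √(π / (4 * x / π ^ 2)) := by
        gcongr
        exact intervalIntegral_exp_neg_mul_sub_sq_le (by positivity) _ hαβ
    _ = π * √π / 2 * x ^ (-(1 : ℝ) / 2) * exp (x / 2) := by
        rw [sqrt_pi_div_four_mul_div_sq hx]; ring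

theorem stmt12_general (τ α β : ℝ)
    (hα : 0 ≤ α) (hατ : α < τ + π / 4) (hτβ : τ + π / 4 < β) (hβ : β ≤ π / 2) :
    ∃ C : ℝ, 0 < C ∧ ∀ n : ℕ, 1 ≤ n →
      (∫ t in α..β, Real.exp ((n / 2) * Real.sin (2 * t - 2 * τ))) ≤
        C * (n : ℝ) ^ (-(1 : ℝ) / 2) * Real.exp (n / 2) :=
  ⟨π * √π / 2, by positivity, fun n hn =>
    intervalIntegral_exp_mul_sin_le (by exact_mod_cast hn) (by linarith) (by linarith)
      (by linarith)⟩

theorem stmt12 (τ α β : ℝ) (hτ : τ ∈ Set.Ioo (-(π / 4)) (π / 4))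
    (hα : 0 ≤ α) (hατ : α < τ + π / 4) (hτβ : τ + π / 4 < β) (hβ : β ≤ π / 2) :
    ∃ C : ℝ, 0 < C ∧ ∀ n : ℕ, 1 ≤ n →
      (∫ t in α..β, Real.exp ((n / 2) * Real.sin (2 * t - 2 * τ))) ≤
        C * (n : ℝ) ^ (-(1 : ℝ) / 2) * Real.exp (n / 2) :=
  stmt12_general τ α β hα hατ hτβ hβ
end

section
/- Let c ∈ ℂ with Re c > −1 and let f(x) = e^{−c x²/2}. Then for every w ∈ ℂ, Bf(w) = √(2/(1+c)) · exp(((1−c)/(1+c)) w²/4), where the square root is the principal branch. In particular, if c = (1 + iA e^{−2iτ})/(1 − iA e^{−2iτ}) with A ∈ (0,1) and τ ∈ ℝ, then Bf(w) = √(1 − iA e^{−2iτ}) · exp(−iA e^{−2iτ} w²/4). -/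
open MeasureTheory Real Set

/-!
The integrand of `bargmann` applied to `x ↦ exp (-c x² / 2)` is `exp (-(1 + c)/2 · x² + w x)`,
a complex Gaussian whose leading coefficient has negative real part exactly when `Re c > -1`, so
the standard Gaussian integral evaluates it. For the second formula, `c = (1 + z)/(1 - z)` is the
Cayley transform of `z = i A e^{-2iτ}`, which lies in the unit disc; the Cayley transform maps the
disc into the right half-plane, and `2/(1 + c) = 1 - z`, `(1 - c)/(1 + c) = -z`.
-/

open Complex

theorem Complex.ofReal_mul_cpow {r : ℝ} (hr : 0 < r) {z : ℂ} (hz : z ≠ 0) (s : ℂ) :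
    ((r : ℂ) * z) ^ s = (r : ℂ) ^ s * z ^ s := by
  have hr' : (r : ℂ) ≠ 0 := ofReal_ne_zero.mpr hr.ne'
  rw [cpow_def_of_ne_zero (mul_ne_zero hr' hz), log_ofReal_mul hr hz, add_mul,
    Complex.exp_add, ofReal_log hr.le, ← cpow_def_of_ne_zero hr', ← cpow_def_of_ne_zero hz]

theorem Complex.re_div_one_sub_pos_of_norm_lt_one {z : ℂ} (hz : ‖z‖ < 1) :
    0 < ((1 + z) / (1 - z)).re := by
  have h1z : 1 - z ≠ 0 := sub_ne_zero.mpr (ne_of_apply_ne norm (by simpa using hz.ne'))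
  have hnum : (1 + z).re * (1 - z).re + (1 + z).im * (1 - z).im = 1 - ‖z‖ ^ 2 := by
    rw [Complex.sq_norm, normSq_apply]
    simp only [add_re, sub_re, one_re, add_im, sub_im, one_im]
    ring
  rw [div_re, ← add_div, hnum]
  exact div_pos (by nlinarith [norm_nonneg z]) (normSq_pos.mpr h1z)

theorem bargmann_cexp_neg_mul_sq {c : ℂ} (hc : -1 < c.re) (w : ℂ) :
    bargmann (fun x => cexp (-c * (x : ℂ) ^ 2 / 2)) w =
      (2 / (1 + c)) ^ ((1 : ℂ) / 2) * cexp ((1 - c) / (1 + c) * w ^ 2 / 4) := by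
  have h1c : 1 + c ≠ 0 := by
    intro h
    have := congrArg re h
    simp only [add_re, one_re, zero_re] at this
    linarith
  have hb : (-(1 + c) / 2).re < 0 := by
    simp only [div_ofNat_re, neg_re, add_re, one_re]
    linarith
  have hint : ∫ x : ℝ, cexp (x * w - x ^ 2 / 2) * cexp (-c * x ^ 2 / 2) =
      (π * (2 / (1 + c))) ^ ((1 : ℂ) / 2) * cexp (w ^ 2 / (2 * (1 + c))) := by
    convert integral_cexp_quadratic hb w 0 using 1
    · congr 1 with x
      rw [← Complex.exp_add]
      ring_nf
    · congr 2
      · field_simp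
      · field_simp
        ring
  have hsqrt : ((√π : ℝ) : ℂ) = (π : ℂ) ^ ((1 : ℂ) / 2) := by
    rw [sqrt_eq_rpow, ofReal_cpow pi_pos.le]
    push_cast
    ring_nf
  have hexp : -w ^ 2 / 4 + w ^ 2 / (2 * (1 + c)) = (1 - c) / (1 + c) * w ^ 2 / 4 := by
    field_simp
    ring
  rw [bargmann, hint, ofReal_mul_cpow pi_pos (div_ne_zero two_ne_zero h1c), ← hsqrt, ← hexp,
    Complex.exp_add]
  have hπ : ((√π : ℝ) : ℂ) ≠ 0 := ofReal_ne_zero.mpr (sqrt_pos.mpr pi_pos).ne'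
  field_simp

theorem bargmann_cexp_neg_cayley_mul_sq {z : ℂ} (hz : ‖z‖ < 1) (w : ℂ) :
    bargmann (fun x => cexp (-((1 + z) / (1 - z)) * (x : ℂ) ^ 2 / 2)) w =
      (1 - z) ^ ((1 : ℂ) / 2) * cexp (-z * w ^ 2 / 4) := by
  have h1z : 1 - z ≠ 0 := sub_ne_zero.mpr (ne_of_apply_ne norm (by simpa using hz.ne'))
  have hre := re_div_one_sub_pos_of_norm_lt_one hz
  rw [bargmann_cexp_neg_mul_sq (by linarith) w]
  congr 3 <;> field_simp <;> ring

theorem stmt17 :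
    (∀ c : ℂ, -1 < c.re → ∀ w : ℂ,
      bargmann (fun x => Complex.exp (-c * (x : ℂ) ^ 2 / 2)) w =
        (2 / (1 + c)) ^ ((1 : ℂ) / 2) *
          Complex.exp ((1 - c) / (1 + c) * w ^ 2 / 4)) ∧
    (∀ A τ : ℝ, A ∈ Set.Ioo (0 : ℝ) 1 → ∀ w : ℂ,
      bargmann (fun x => Complex.exp
          (-((1 + Complex.I * A * Complex.exp (-(2 * Complex.I * τ))) /
             (1 - Complex.I * A * Complex.exp (-(2 * Complex.I * τ)))) *
            (x : ℂ) ^ 2 / 2)) w =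
        (1 - Complex.I * A * Complex.exp (-(2 * Complex.I * τ))) ^ ((1 : ℂ) / 2) *
          Complex.exp (-(Complex.I * A * Complex.exp (-(2 * Complex.I * τ))) *
            w ^ 2 / 4)) := by
  refine ⟨fun c hc w => bargmann_cexp_neg_mul_sq hc w, fun A τ hA w => ?_⟩
  have hnorm : ‖I * A * cexp (-(2 * I * τ))‖ = A := by
    simp [norm_exp, abs_of_pos hA.1]
  exact bargmann_cexp_neg_cayley_mul_sq (hnorm.trans_lt hA.2) w
end

section
/- Let a, b > 0 with ab < 1, let z = iA e^{−2iτ}, and let f(x) = exp(−((1+z)/(1−z)) x²/2). Then Re((1+z)/(1−z)) = a and Re((1−z)/(1+z)) = b; consequently |f(x)| = e^{−a x²/2} for all x ∈ ℝ, |Ff(ξ)| = (b/a)^{1/4} e^{−b ξ²/2} for all ξ ∈ ℝ, and f ∈ E(a,b). -/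
/-!
The two real-part identities are Cayley-transform computations: `Re ((1 + z)/(1 - z))` equals
`(1 - |z|²)/|1 - z|²` and `|1 - z|² = 1 - 2 Re z + |z|²`, so both reduce to `|z|² = A²` and
`Re z = A sin 2τ = (a - b)/(a + b + 2ab)`, which is what the choice of `τ` encodes; replacing `z`
by `-z` swaps `a` and `b`. Then `f` is the Gaussian `exp (-w x²/2)` with `Re w = a`, whose
Fourier transform has modulus `|w|^(-1/2) exp (-Re (w⁻¹) ξ²/2)`, and
`|w|² = Re w / Re (w⁻¹) = a/b`.
-/

open MeasureTheory Real Set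

section

open Complex

lemma Complex.re_one_add_div_one_sub (z : ℂ) :
    ((1 + z) / (1 - z)).re = (1 - normSq z) / normSq (1 - z) := by
  rw [div_re, normSq_apply z]
  simp only [add_re, sub_re, one_re, add_im, sub_im, one_im]
  ring

lemma re_one_add_div_one_sub_eq {a b : ℝ} (ha : 0 < a) (hb : 0 < b) {z : ℂ}
    (hre : z.re = (a - b) / (a + b + 2 * a * b))
    (hnormSq : normSq z = (a + b - 2 * a * b) / (a + b + 2 * a * b)) :
    ((1 + z) / (1 - z)).re = a := by
  have hQ : 0 < a + b + 2 * a * b := by positivity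
  have hden : normSq (1 - z) = 4 * b / (a + b + 2 * a * b) := by
    rw [normSq_sub, map_one, one_mul, conj_re, hre, hnormSq]
    field_simp
    ring
  rw [re_one_add_div_one_sub, hnormSq, hden]
  field_simp
  ring

lemma cayley_sub_div_sqrt {a b μ ν : ℝ} (ha : -1 < a) (hb : -1 < b)
    (hμ : μ = (1 - a) / (1 + a)) (hν : ν = (1 - b) / (1 + b)) :
    (ν - μ) / √((μ + ν - 2 * μ * ν) * (2 - μ - ν))
      = (a - b) / √((a + b - 2 * a * b) * (a + b + 2 * a * b)) := by
  have ha' : 0 < 1 + a := by linarith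
  have hb' : 0 < 1 + b := by linarith
  have hnum : ν - μ = 2 / ((1 + a) * (1 + b)) * (a - b) := by
    rw [hμ, hν]; field_simp; ring
  have hrad : (μ + ν - 2 * μ * ν) * (2 - μ - ν)
      = (2 / ((1 + a) * (1 + b))) ^ 2 * ((a + b - 2 * a * b) * (a + b + 2 * a * b)) := by
    rw [hμ, hν]; field_simp; ring
  rw [hnum, hrad, Real.sqrt_mul (sq_nonneg _), Real.sqrt_sq (by positivity),
    mul_div_mul_left _ _ (by positivity)]

lemma Real.sqrt_div_mul_div_sqrt_mul {P Q : ℝ} (hP : 0 < P) (hQ : 0 < Q) (t : ℝ) :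
    √(P / Q) * (t / √(P * Q)) = t / Q := by
  rw [Real.sqrt_div hP.le, Real.sqrt_mul hP.le]
  field_simp
  rw [Real.sq_sqrt hQ.le, mul_comm]

lemma re_I_mul_cexp (A τ : ℝ) : (I * A * cexp (-(2 * I * τ))).re = A * Real.sin (2 * τ) := by
  simp [exp_re, exp_im, mul_re, mul_im, mul_comm]

lemma normSq_I_mul_cexp (A τ : ℝ) : normSq (I * A * cexp (-(2 * I * τ))) = A ^ 2 := by
  simp [normSq_eq_norm_sq, norm_exp]

lemma norm_cexp_neg_mul_sq_div_two (c : ℂ) (x : ℝ) :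
    ‖cexp (-c * x ^ 2 / 2)‖ = rexp (-c.re * x ^ 2 / 2) := by
  rw [norm_exp, show -c * x ^ 2 / 2 = ((x ^ 2 / 2 : ℝ) : ℂ) * -c by push_cast; ring,
    re_ofReal_mul, neg_re]
  ring_nf

lemma integrable_cexp_neg_mul_sq_div_two {c : ℂ} (hc : 0 < c.re) :
    Integrable fun x : ℝ => cexp (-c * x ^ 2 / 2) := by
  have hc2 : 0 < (c / 2).re := by simpa using hc
  convert integrable_cexp_neg_mul_sq hc2 using 3
  ring

lemma norm_fourierT_gaussian {c : ℂ} (hc : 0 < c.re) (ξ : ℝ) :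
    ‖fourierT (fun x : ℝ => cexp (-c * x ^ 2 / 2)) ξ‖
      = ‖c‖ ^ (-(1 / 2 : ℝ)) * rexp (-c⁻¹.re * ξ ^ 2 / 2) := by
  have hc2 : 0 < (c / 2).re := by simpa using hc
  have hF : fourierT (fun x : ℝ => cexp (-c * x ^ 2 / 2)) ξ
      = (1 / √(2 * π) : ℝ) *
        ((π / (c / 2)) ^ (1 / 2 : ℂ) * cexp (-(-ξ : ℂ) ^ 2 / (4 * (c / 2)))) := by
    rw [fourierT, ← fourierIntegral_gaussian hc2]
    congr 2 with x
    rw [← Complex.exp_add, ← Complex.exp_add]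
    ring_nf
  have hpow : ‖(π / (c / 2)) ^ (1 / 2 : ℂ)‖ = √(2 * π) * ‖c‖ ^ (-(1 / 2 : ℝ)) := by
    rw [show (1 / 2 : ℂ) = ((1 / 2 : ℝ) : ℂ) by norm_num, norm_cpow_real, norm_div, norm_div,
      norm_real, Real.norm_of_nonneg pi_pos.le, Complex.norm_two, div_div_eq_mul_div,
      Real.div_rpow (by positivity) (norm_nonneg _), Real.sqrt_eq_rpow,
      Real.rpow_neg (norm_nonneg _), div_eq_mul_inv, mul_comm π]
  have hexp : (-(-ξ : ℂ) ^ 2 / (4 * (c / 2))).re = -c⁻¹.re * ξ ^ 2 / 2 := by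
    rw [show -(-ξ : ℂ) ^ 2 / (4 * (c / 2)) = ((-ξ ^ 2 / 2 : ℝ) : ℂ) * c⁻¹ by
      push_cast; field_simp; ring, re_ofReal_mul]
    ring
  rw [hF, norm_mul, norm_mul, norm_exp, hexp, hpow, norm_real,
    Real.norm_of_nonneg (by positivity)]
  field_simp

lemma norm_rpow_neg_half {c : ℂ} (hc : 0 < c.re) :
    ‖c‖ ^ (-(1 / 2 : ℝ)) = (c⁻¹.re / c.re) ^ ((1 : ℝ) / 4) := by
  have hnormSq : 0 < normSq c := normSq_pos.mpr fun h => by simp [h] at hc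
  rw [inv_re, div_div_cancel_left' hc.ne', normSq_eq_norm_sq, Real.inv_rpow (by positivity),
    ← Real.rpow_natCast, ← Real.rpow_mul (norm_nonneg _), Real.rpow_neg (norm_nonneg _)]
  norm_num

lemma memE_of_norm_le {a b C₁ C₂ : ℝ} {f : ℝ → ℂ} (hf : Integrable f)
    (hx : ∀ x, ‖f x‖ ≤ C₁ * rexp (-a * x ^ 2 / 2))
    (hξ : ∀ ξ, ‖fourierT f ξ‖ ≤ C₂ * rexp (-b * ξ ^ 2 / 2)) : memE a b f :=
  ⟨hf, max C₁ C₂, fun x => (hx x).trans (by gcongr; exact le_max_left _ _),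
    fun ξ => (hξ ξ).trans (by gcongr; exact le_max_right _ _)⟩

end

theorem stmt18_general (a b : ℝ) (ha : 0 < a) (hb : 0 < b) (hab : a * b < 1)
    (μ ν A τ : ℝ) (hμ : μ = (1 - a) / (1 + a)) (hν : ν = (1 - b) / (1 + b))
    (hA : A = Real.sqrt ((a + b - 2 * a * b) / (a + b + 2 * a * b)))
    (hτs : Real.sin (2 * τ)
      = (ν - μ) / Real.sqrt ((μ + ν - 2 * μ * ν) * (2 - μ - ν)))
    (z : ℂ) (hz : z = Complex.I * A * Complex.exp (-(2 * Complex.I * τ)))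
    (f : ℝ → ℂ) (hf : f = fun x : ℝ => Complex.exp (-((1 + z) / (1 - z)) * (x : ℂ) ^ 2 / 2)) :
    ((1 + z) / (1 - z)).re = a ∧ ((1 - z) / (1 + z)).re = b ∧
    (∀ x : ℝ, ‖f x‖ = Real.exp (-a * x ^ 2 / 2)) ∧
    (∀ ξ : ℝ, ‖fourierT f ξ‖
      = (b / a) ^ ((1 : ℝ) / 4) * Real.exp (-b * ξ ^ 2 / 2)) ∧
    memE a b f := by
  have hP : 0 < a + b - 2 * a * b := by
    nlinarith [mul_pos (add_pos ha hb) (sub_pos.mpr hab),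
      mul_nonneg ha.le (sq_nonneg (1 - b)), mul_nonneg hb.le (sq_nonneg (1 - a))]
  have hQ : 0 < a + b + 2 * a * b := by positivity
  have hre : z.re = (a - b) / (a + b + 2 * a * b) := by
    rw [hz, re_I_mul_cexp, hτs, cayley_sub_div_sqrt (by linarith) (by linarith) hμ hν, hA,
      Real.sqrt_div_mul_div_sqrt_mul hP hQ]
  have hnormSq : Complex.normSq z = (a + b - 2 * a * b) / (a + b + 2 * a * b) := by
    rw [hz, normSq_I_mul_cexp, hA, Real.sq_sqrt (by positivity)]
  have hw : ((1 + z) / (1 - z)).re = a := re_one_add_div_one_sub_eq ha hb hre hnormSq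
  have hw' : ((1 - z) / (1 + z)).re = b := by
    simpa [sub_eq_add_neg, add_comm] using re_one_add_div_one_sub_eq hb ha (z := -z)
      (by rw [Complex.neg_re, hre]; ring) (by rw [Complex.normSq_neg, hnormSq]; ring)
  have hw_pos : 0 < ((1 + z) / (1 - z)).re := hw ▸ ha
  have hnorm_f (x : ℝ) : ‖f x‖ = Real.exp (-a * x ^ 2 / 2) := by
    rw [hf, norm_cexp_neg_mul_sq_div_two, hw]
  have hnorm_Ff (ξ : ℝ) :
      ‖fourierT f ξ‖ = (b / a) ^ ((1 : ℝ) / 4) * Real.exp (-b * ξ ^ 2 / 2) := by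
    rw [hf, norm_fourierT_gaussian hw_pos, norm_rpow_neg_half hw_pos, inv_div, hw, hw']
  have hint : Integrable f := hf ▸ integrable_cexp_neg_mul_sq_div_two hw_pos
  exact ⟨hw, hw', hnorm_f, hnorm_Ff, memE_of_norm_le (C₁ := 1) hint
    (fun x => by rw [one_mul, hnorm_f]) (fun ξ => (hnorm_Ff ξ).le)⟩

theorem stmt18 (a b : ℝ) (ha : 0 < a) (hb : 0 < b) (hab : a * b < 1)
    (μ ν A τ : ℝ) (hμ : μ = (1 - a) / (1 + a)) (hν : ν = (1 - b) / (1 + b))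
    (hA : A = Real.sqrt ((a + b - 2 * a * b) / (a + b + 2 * a * b)))
    (hτ : τ ∈ Set.Ioo (-(π / 4)) (π / 4))
    (hτs : Real.sin (2 * τ)
      = (ν - μ) / Real.sqrt ((μ + ν - 2 * μ * ν) * (2 - μ - ν)))
    (z : ℂ) (hz : z = Complex.I * A * Complex.exp (-(2 * Complex.I * τ)))
    (f : ℝ → ℂ) (hf : f = fun x : ℝ => Complex.exp (-((1 + z) / (1 - z)) * (x : ℂ) ^ 2 / 2)) :
    ((1 + z) / (1 - z)).re = a ∧ ((1 - z) / (1 + z)).re = b ∧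
    (∀ x : ℝ, ‖f x‖ = Real.exp (-a * x ^ 2 / 2)) ∧
    (∀ ξ : ℝ, ‖fourierT f ξ‖
      = (b / a) ^ ((1 : ℝ) / 4) * Real.exp (-b * ξ ^ 2 / 2)) ∧
    memE a b f :=
  stmt18_general a b ha hb hab μ ν A τ hμ hν hA hτs z hz f hf
end

section
/- Let a, b > 0 with ab < 1, let z = iA e^{−2iτ}, and let f(x) = exp(−((1+z)/(1−z)) x²/2). Then ⟨f, φ_n⟩ = 0 for every odd n, and there exist constants 0 < c₁ ≤ c₂ such that for every even integer n ≥ 2, c₁ n^{−1/4} A^{n/2} ≤ |⟨f, φ_n⟩| ≤ c₂ n^{−1/4} A^{n/2}. In particular, the exponential rate A^{n/2} = ((a+b−2ab)/(a+b+2ab))^{n/4} in the Hermite coefficient estimate for E(a,b) is sharp. -/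
open MeasureTheory Real Set

/-!
Since `f · e^{-x²/2} = e^{-q x²}` with `q = 1/(1 - z)`, the coefficient `⟨f, φ_n⟩` is a normalised
multiple of `I_n = ∫ H_n(x) e^{-q x²} dx`. The boundary terms of `(p e^{-q x²})'` vanish, so
`∫ p' e^{-q x²} = 2q ∫ x p e^{-q x²}`; combined with `2x H_{n+1} = H_{n+2} + H_{n+1}'` and
`H_{n+1}' = 2(n+1) H_n` this gives `I_1 = 0` and `I_{n+2} = (1/q - 1)(2n+2) I_n = -z (2n+2) I_n`.
Hence odd coefficients vanish and `|⟨f, φ_{2k}⟩| = C |z|^k (binom(2k,k)/4^k)^{1/2}` with `|z| = A`;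
the ratio `binom(2k,k)/4^k` has square between `1/(4k)` and `1/(2k+1)`, which gives the `n^{-1/4}`.
-/

open Polynomial
open scoped Complex

noncomputable def physHermitePoly : ℕ → ℝ[X]
  | 0 => 1
  | n + 1 => C 2 * X * physHermitePoly n - derivative (physHermitePoly n)

namespace physHermitePoly

lemma zero : physHermitePoly 0 = 1 :=
  rfl

lemma succ (n : ℕ) :
    physHermitePoly (n + 1) = C 2 * X * physHermitePoly n - derivative (physHermitePoly n) :=
  rfl

lemma iteratedDeriv_exp_neg_sq (n : ℕ) (x : ℝ) :
    iteratedDeriv n (fun y => Real.exp (-y ^ 2)) x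
      = (-1) ^ n * (physHermitePoly n).eval x * Real.exp (-x ^ 2) := by
  induction n generalizing x with
  | zero => simp [physHermitePoly]
  | succ n ih =>
    have hgauss (x : ℝ) :
        HasDerivAt (fun y : ℝ => Real.exp (-y ^ 2)) (-(2 * x) * Real.exp (-x ^ 2)) x := by
      simpa [mul_comm] using ((hasDerivAt_pow 2 x).fun_neg).exp
    have hderiv := ((((physHermitePoly n).hasDerivAt x).fun_mul (hgauss x)).const_mul
      ((-1 : ℝ) ^ n))
    rw [iteratedDeriv_succ, funext ih]
    simp_rw [mul_assoc] at hderiv ⊢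
    rw [hderiv.deriv, succ]
    simp only [eval_sub, eval_mul, eval_C, eval_X]
    ring

lemma physHermite_eq_eval (n : ℕ) (x : ℝ) : physHermite n x = (physHermitePoly n).eval x := by
  have hexp : Real.exp (x ^ 2) * Real.exp (-x ^ 2) = 1 := by rw [← Real.exp_add]; simp
  have hsign : ((-1 : ℝ) ^ n) ^ 2 = 1 := by rw [← pow_mul, mul_comm, pow_mul]; simp
  rw [physHermite, iteratedDeriv_exp_neg_sq]
  linear_combination ((physHermitePoly n).eval x * ((-1) ^ n) ^ 2) * hexp
    + (physHermitePoly n).eval x * hsign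

lemma derivative_succ (n : ℕ) :
    derivative (physHermitePoly (n + 1)) = C (2 * (n + 1 : ℝ)) * physHermitePoly n := by
  induction n with
  | zero => simp [physHermitePoly]
  | succ n ih =>
    rw [succ (n + 1), derivative_sub, derivative_mul, derivative_mul, ih, succ n]
    simp only [derivative_mul, derivative_C, derivative_X, Nat.cast_add, Nat.cast_one, C_add,
      C_mul, C_1, derivative_add, derivative_one]
    ring

end physHermitePoly

section GaussPairing

variable {q : ℂ}

lemma integrable_pow_mul_cexp_neg_mul_sq (hq : 0 < q.re) (n : ℕ) :
    Integrable fun x : ℝ => (x : ℂ) ^ n * cexp (-q * (x : ℂ) ^ 2) := by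
  have hreal : Integrable fun x : ℝ => x ^ n * Real.exp (-q.re * x ^ 2) := by
    simpa using integrable_rpow_mul_exp_neg_mul_sq hq (by linarith [n.cast_nonneg (α := ℝ)] :
      (-1 : ℝ) < n)
  refine hreal.mono (by fun_prop) (.of_forall fun x => ?_)
  rw [norm_mul, norm_mul, norm_cexp_neg_mul_sq, norm_pow, Complex.norm_real, norm_pow,
    Real.norm_of_nonneg (Real.exp_pos _).le]

lemma integrable_eval_mul_cexp_neg_mul_sq (hq : 0 < q.re) (p : ℝ[X]) :
    Integrable fun x : ℝ => ((p.eval x : ℝ) : ℂ) * cexp (-q * (x : ℂ) ^ 2) := by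
  induction p using Polynomial.induction_on' with
  | add p r hp hr =>
    simp only [eval_add, Complex.ofReal_add, add_mul]
    exact hp.add hr
  | monomial n c =>
    simpa [mul_assoc] using (integrable_pow_mul_cexp_neg_mul_sq hq n).const_mul (c : ℂ)

noncomputable def gaussPairing (q : ℂ) (p : ℝ[X]) : ℂ :=
  ∫ x : ℝ, ((p.eval x : ℝ) : ℂ) * cexp (-q * (x : ℂ) ^ 2)

lemma gaussPairing_sub (hq : 0 < q.re) (p r : ℝ[X]) :
    gaussPairing q (p - r) = gaussPairing q p - gaussPairing q r := by
  simp only [gaussPairing, eval_sub, Complex.ofReal_sub, sub_mul]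
  exact integral_sub (integrable_eval_mul_cexp_neg_mul_sq hq p)
    (integrable_eval_mul_cexp_neg_mul_sq hq r)

lemma gaussPairing_C_mul (c : ℝ) (p : ℝ[X]) :
    gaussPairing q (C c * p) = c * gaussPairing q p := by
  simp only [gaussPairing, eval_mul, eval_C, Complex.ofReal_mul, mul_assoc]
  exact integral_const_mul _ _

lemma hasDerivAt_eval_mul_cexp_neg_mul_sq (q : ℂ) (p : ℝ[X]) (x : ℝ) :
    HasDerivAt (fun x : ℝ => ((p.eval x : ℝ) : ℂ) * cexp (-q * (x : ℂ) ^ 2))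
      (((p.derivative.eval x : ℝ) : ℂ) * cexp (-q * (x : ℂ) ^ 2)
        - 2 * q * ((((X * p).eval x : ℝ) : ℂ) * cexp (-q * (x : ℂ) ^ 2))) x := by
  have hsq : HasDerivAt (fun x : ℝ => -q * (x : ℂ) ^ 2) (-q * (2 * x)) x := by
    simpa using ((hasDerivAt_pow 2 x).ofReal_comp).const_mul (-q)
  refine (((p.hasDerivAt x).ofReal_comp).fun_mul hsq.cexp).congr_deriv ?_
  simp only [eval_mul, eval_X, Complex.ofReal_mul]
  ring

lemma gaussPairing_derivative (hq : 0 < q.re) (p : ℝ[X]) :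
    gaussPairing q (derivative p) = 2 * q * gaussPairing q (X * p) := by
  have hzero := integral_eq_zero_of_hasDerivAt_of_integrable
    (hasDerivAt_eval_mul_cexp_neg_mul_sq q p)
    ((integrable_eval_mul_cexp_neg_mul_sq hq _).sub
      ((integrable_eval_mul_cexp_neg_mul_sq hq _).const_mul _))
    (integrable_eval_mul_cexp_neg_mul_sq hq p)
  rw [integral_sub (integrable_eval_mul_cexp_neg_mul_sq hq _)
    ((integrable_eval_mul_cexp_neg_mul_sq hq _).const_mul _),
    integral_const_mul] at hzero
  exact sub_eq_zero.mp hzero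

lemma gaussPairing_one_ne_zero (hq : 0 < q.re) : gaussPairing q 1 ≠ 0 := by
  have hq0 : q ≠ 0 := by rintro rfl; simp at hq
  simp only [gaussPairing, eval_one, Complex.ofReal_one, one_mul, integral_gaussian_complex hq]
  exact fun h => div_ne_zero (Complex.ofReal_ne_zero.mpr Real.pi_ne_zero) hq0
    ((Complex.cpow_eq_zero_iff _ _).mp h).1

lemma gaussPairing_physHermitePoly_add_two (hq : 0 < q.re) (n : ℕ) :
    gaussPairing q (physHermitePoly (n + 2))
      = (q⁻¹ - 1) * (2 * (n + 1)) * gaussPairing q (physHermitePoly n) := by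
  have hq0 : q ≠ 0 := by rintro rfl; simp at hq
  have hparts := gaussPairing_derivative hq (physHermitePoly (n + 1))
  rw [physHermitePoly.derivative_succ, gaussPairing_C_mul] at hparts
  rw [physHermitePoly.succ (n + 1), gaussPairing_sub hq, mul_assoc, gaussPairing_C_mul,
    physHermitePoly.derivative_succ, gaussPairing_C_mul]
  field_simp
  push_cast at hparts ⊢
  linear_combination -hparts

lemma gaussPairing_physHermitePoly_one (hq : 0 < q.re) :
    gaussPairing q (physHermitePoly 1) = 0 := by
  have hq0 : q ≠ 0 := by rintro rfl; simp at hq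
  have hzero : gaussPairing q 0 = 0 := by simp [gaussPairing]
  have hX : gaussPairing q X = 0 := by
    have hparts := gaussPairing_derivative hq 1
    rw [derivative_one, mul_one, hzero] at hparts
    exact (mul_eq_zero.mp hparts.symm).resolve_left (mul_ne_zero two_ne_zero hq0)
  rw [physHermitePoly.succ, physHermitePoly.zero, mul_one, derivative_one, gaussPairing_sub hq,
    gaussPairing_C_mul, hX, hzero]
  simp

lemma gaussPairing_physHermitePoly_of_odd (hq : 0 < q.re) {n : ℕ} (hn : Odd n) :
    gaussPairing q (physHermitePoly n) = 0 := by
  obtain ⟨k, rfl⟩ := hn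
  induction k with
  | zero => exact gaussPairing_physHermitePoly_one hq
  | succ k ih => rw [show 2 * (k + 1) + 1 = 2 * k + 1 + 2 by ring,
      gaussPairing_physHermitePoly_add_two hq, ih, mul_zero]

lemma gaussPairing_physHermitePoly_two_mul (hq : 0 < q.re) (k : ℕ) :
    gaussPairing q (physHermitePoly (2 * k)) * k.factorial
      = (q⁻¹ - 1) ^ k * (2 * k).factorial * gaussPairing q 1 := by
  induction k with
  | zero => simp [physHermitePoly.zero]
  | succ k ih =>
    rw [show 2 * (k + 1) = 2 * k + 2 by ring, gaussPairing_physHermitePoly_add_two hq,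
      Nat.factorial_succ, Nat.factorial_succ, Nat.factorial_succ]
    push_cast
    linear_combination ((q⁻¹ - 1) * (2 * (2 * k + 1)) * (k + 1)) * ih

end GaussPairing

lemma hermiteCoeff_cexp_neg_mul_sq (w : ℂ) (n : ℕ) :
    hermiteCoeff (fun x : ℝ => cexp (-w * (x : ℂ) ^ 2 / 2)) n
      = ((√(2 ^ n * n.factorial * √π))⁻¹ : ℝ) * gaussPairing ((w + 1) / 2) (physHermitePoly n) := by
  rw [hermiteCoeff, gaussPairing, ← integral_const_mul]
  congr 1 with x
  simp only [hermiteFn, physHermitePoly.physHermite_eq_eval, Complex.ofReal_mul,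
    Complex.ofReal_exp]
  rw [show -((w + 1) / 2) * (x : ℂ) ^ 2 = -w * x ^ 2 / 2 + ((-x ^ 2 / 2 : ℝ) : ℂ) by
    push_cast; ring, Complex.exp_add]
  ring

lemma centralBinom_succ_div_four_pow (k : ℕ) :
    (k + 1).centralBinom / (4 : ℝ) ^ (k + 1)
      = k.centralBinom / 4 ^ k * ((2 * k + 1) / (2 * k + 2)) := by
  have h : ((k : ℝ) + 1) * (k + 1).centralBinom = 2 * (2 * k + 1) * k.centralBinom := by
    exact_mod_cast Nat.succ_mul_centralBinom_succ k
  field_simp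
  linear_combination 4 ^ k * 2 * h

lemma sq_centralBinom_div_four_pow_le (k : ℕ) :
    (k.centralBinom / (4 : ℝ) ^ k) ^ 2 ≤ 1 / (2 * k + 1) := by
  induction k with
  | zero => simp
  | succ k ih =>
    rw [centralBinom_succ_div_four_pow, mul_pow]
    calc _ ≤ (1 : ℝ) / (2 * k + 1) * ((2 * k + 1) / (2 * k + 2)) ^ 2 := by gcongr
      _ ≤ 1 / (2 * (k + 1 : ℕ) + 1) := by
        push_cast
        rw [div_pow, div_mul_div_comm, div_le_div_iff₀ (by positivity) (by positivity)]
        nlinarith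

lemma le_sq_centralBinom_div_four_pow {k : ℕ} (hk : 1 ≤ k) :
    1 / (4 * k) ≤ (k.centralBinom / (4 : ℝ) ^ k) ^ 2 := by
  induction k, hk using Nat.le_induction with
  | base => norm_num [Nat.centralBinom, Nat.choose]
  | succ k hk ih =>
    have hk' : (1 : ℝ) ≤ k := by exact_mod_cast hk
    rw [centralBinom_succ_div_four_pow, mul_pow]
    calc (1 : ℝ) / (4 * (k + 1 : ℕ)) ≤ 1 / (4 * k) * ((2 * k + 1) / (2 * k + 2)) ^ 2 := by
          push_cast
          rw [div_pow, div_mul_div_comm, div_le_div_iff₀ (by positivity) (by positivity)]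
          nlinarith
      _ ≤ _ := by gcongr

lemma rpow_neg_one_div_four_pow_four {x : ℝ} (hx : 0 ≤ x) :
    (x ^ (-(1 : ℝ) / 4)) ^ 4 = x⁻¹ := by
  rw [← Real.rpow_natCast, ← Real.rpow_mul hx]
  norm_num [Real.rpow_neg_one]

lemma sqrt_centralBinom_div_four_pow_le {k : ℕ} (hk : 1 ≤ k) :
    √(k.centralBinom / (4 : ℝ) ^ k) ≤ ((2 * k : ℕ) : ℝ) ^ (-(1 : ℝ) / 4) := by
  have hk' : (1 : ℝ) ≤ k := by exact_mod_cast hk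
  rw [← pow_le_pow_iff_left₀ (by positivity) (by positivity) four_ne_zero,
    rpow_neg_one_div_four_pow_four (by positivity),
    show 4 = 2 * 2 by rfl, pow_mul, Real.sq_sqrt (by positivity)]
  refine (sq_centralBinom_div_four_pow_le k).trans ?_
  push_cast
  rw [one_div]
  gcongr
  linarith

lemma rpow_le_two_mul_sqrt_centralBinom_div_four_pow {k : ℕ} (hk : 1 ≤ k) :
    ((2 * k : ℕ) : ℝ) ^ (-(1 : ℝ) / 4) ≤ 2 * √(k.centralBinom / (4 : ℝ) ^ k) := by
  have hk' : (1 : ℝ) ≤ k := by exact_mod_cast hk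
  rw [← pow_le_pow_iff_left₀ (by positivity) (by positivity) four_ne_zero,
    rpow_neg_one_div_four_pow_four (by positivity), mul_pow,
    show 4 = 2 * 2 by rfl, pow_mul (√_), Real.sq_sqrt (by positivity)]
  refine le_trans ?_ (mul_le_mul_of_nonneg_left (le_sq_centralBinom_div_four_pow hk)
    (by positivity))
  push_cast
  field_simp
  nlinarith

lemma norm_hermiteCoeff_cexp_neg_mul_sq_two_mul {w : ℂ} (hw : 0 < ((w + 1) / 2).re) (k : ℕ) :
    ‖hermiteCoeff (fun x : ℝ => cexp (-w * (x : ℂ) ^ 2 / 2)) (2 * k)‖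
      = ‖gaussPairing ((w + 1) / 2) 1‖ / √(√π) * ‖((w + 1) / 2)⁻¹ - 1‖ ^ k
        * √(k.centralBinom / (4 : ℝ) ^ k) := by
  have hclosed := congrArg norm (gaussPairing_physHermitePoly_two_mul hw k)
  simp only [norm_mul, norm_pow, Complex.norm_natCast] at hclosed
  have hfac : (k.factorial : ℝ) ≠ 0 := by positivity
  rw [← eq_div_iff hfac] at hclosed
  have hcb : (k.centralBinom : ℝ) * k.factorial * k.factorial = (2 * k).factorial := by
    have h := Nat.choose_mul_factorial_mul_factorial (by omega : k ≤ 2 * k)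
    rw [show 2 * k - k = k by omega, ← Nat.centralBinom_eq_two_mul_choose] at h
    exact_mod_cast h
  rw [hermiteCoeff_cexp_neg_mul_sq, norm_mul, Complex.norm_real, Real.norm_of_nonneg
    (by positivity), ← sq_eq_sq₀ (by positivity) (by positivity)]
  simp only [mul_pow, div_pow, inv_pow]
  rw [Real.sq_sqrt (by positivity), Real.sq_sqrt (by positivity), Real.sq_sqrt (by positivity),
    hclosed, ← hcb, pow_mul]
  field_simp
  ring

lemma sub_two_mul_div_add_two_mul_mem_Ioo {a b : ℝ} (ha : 0 < a) (hb : 0 < b) (hab : a * b < 1) :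
    (a + b - 2 * a * b) / (a + b + 2 * a * b) ∈ Ioo 0 1 := by
  have hden : 0 < a + b + 2 * a * b := by positivity
  refine ⟨div_pos ?_ hden, (div_lt_one hden).2 (by nlinarith [mul_pos ha hb])⟩
  nlinarith [sq_nonneg (a - b), mul_pos ha hb, mul_pos (mul_pos ha hb) (sub_pos.2 hab)]

lemma re_inv_one_sub_pos {z : ℂ} (hz : ‖z‖ < 1) : 0 < ((1 - z)⁻¹).re := by
  have hre : 0 < (1 - z).re := by
    rw [Complex.sub_re, Complex.one_re, sub_pos]
    exact (Complex.re_le_norm z).trans_lt hz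
  rw [Complex.inv_re]
  exact div_pos hre (Complex.normSq_pos.2 fun h => by simp [h] at hre)

lemma add_one_div_two_eq_inv {z : ℂ} (hz : z ≠ 1) : ((1 + z) / (1 - z) + 1) / 2 = (1 - z)⁻¹ := by
  have : 1 - z ≠ 0 := sub_ne_zero.2 hz.symm
  field_simp
  ring

lemma hermiteCoeff_gaussian_of_odd {z : ℂ} (hz : ‖z‖ < 1) {n : ℕ} (hn : Odd n) :
    hermiteCoeff (fun x : ℝ => cexp (-((1 + z) / (1 - z)) * (x : ℂ) ^ 2 / 2)) n = 0 := by
  rw [hermiteCoeff_cexp_neg_mul_sq, add_one_div_two_eq_inv (by rintro rfl; simp at hz),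
    gaussPairing_physHermitePoly_of_odd (re_inv_one_sub_pos hz) hn, mul_zero]

lemma norm_hermiteCoeff_gaussian_two_mul {z : ℂ} (hz : ‖z‖ < 1) (k : ℕ) :
    ‖hermiteCoeff (fun x : ℝ => cexp (-((1 + z) / (1 - z)) * (x : ℂ) ^ 2 / 2)) (2 * k)‖
      = ‖gaussPairing (1 - z)⁻¹ 1‖ / √(√π) * ‖z‖ ^ k * √(k.centralBinom / (4 : ℝ) ^ k) := by
  have hq := add_one_div_two_eq_inv (z := z) (by rintro rfl; simp at hz)
  rw [norm_hermiteCoeff_cexp_neg_mul_sq_two_mul (hq ▸ re_inv_one_sub_pos hz), hq, inv_inv,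
    sub_sub_cancel_left, norm_neg]

theorem stmt19_general (a b : ℝ) (ha : 0 < a) (hb : 0 < b) (hab : a * b < 1)
    (A τ : ℝ)
    (hA : A = Real.sqrt ((a + b - 2 * a * b) / (a + b + 2 * a * b)))
    (z : ℂ) (hz : z = Complex.I * A * Complex.exp (-(2 * Complex.I * τ)))
    (f : ℝ → ℂ) (hf : f = fun x : ℝ => Complex.exp (-((1 + z) / (1 - z)) * (x : ℂ) ^ 2 / 2)) :
    (∀ n : ℕ, Odd n → hermiteCoeff f n = 0) ∧
    (∃ c₁ c₂ : ℝ, 0 < c₁ ∧ c₁ ≤ c₂ ∧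
      ∀ n : ℕ, 2 ≤ n → Even n →
        c₁ * (n : ℝ) ^ (-(1 : ℝ) / 4) * A ^ ((n : ℝ) / 2) ≤
            ‖hermiteCoeff f n‖ ∧
          ‖hermiteCoeff f n‖ ≤
            c₂ * (n : ℝ) ^ (-(1 : ℝ) / 4) * A ^ ((n : ℝ) / 2)) ∧
    (∀ n : ℕ, A ^ ((n : ℝ) / 2)
      = ((a + b - 2 * a * b) / (a + b + 2 * a * b)) ^ ((n : ℝ) / 4)) := by
  obtain ⟨hB0, hB1⟩ := sub_two_mul_div_add_two_mul_mem_Ioo ha hb hab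
  have hA0 : 0 < A := hA ▸ Real.sqrt_pos.2 hB0
  have hzA : ‖z‖ = A := by
    rw [hz, norm_mul, norm_mul, Complex.norm_I, Complex.norm_real, Complex.norm_exp]
    simp [abs_of_pos hA0]
  have hz1 : ‖z‖ < 1 := by rw [hzA, hA, Real.sqrt_lt' one_pos]; simpa using hB1
  set K := ‖gaussPairing (1 - z)⁻¹ 1‖ / √(√π)
  have hK : 0 < K :=
    div_pos (norm_pos_iff.2 (gaussPairing_one_ne_zero (re_inv_one_sub_pos hz1))) (by positivity)
  subst hf
  refine ⟨fun n hn => hermiteCoeff_gaussian_of_odd hz1 hn,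
    ⟨K / 2, K, by positivity, by linarith, fun n hn2 hn => ?_⟩, fun n => ?_⟩
  · obtain ⟨k, rfl⟩ := hn
    have hk : 1 ≤ k := by omega
    have hAk : A ^ (((k + k : ℕ) : ℝ) / 2) = A ^ k := by
      rw [← Real.rpow_natCast]; push_cast; ring_nf
    rw [hAk, ← two_mul, norm_hermiteCoeff_gaussian_two_mul hz1, hzA]
    have hKA : 0 ≤ K * A ^ k := by positivity
    have hlow := mul_le_mul_of_nonneg_left (rpow_le_two_mul_sqrt_centralBinom_div_four_pow hk) hKA
    have hup := mul_le_mul_of_nonneg_left (sqrt_centralBinom_div_four_pow_le hk) hKA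
    exact ⟨by linarith, by linarith⟩
  · rw [hA, Real.sqrt_eq_rpow, ← Real.rpow_mul hB0.le]
    ring_nf

theorem stmt19 (a b : ℝ) (ha : 0 < a) (hb : 0 < b) (hab : a * b < 1)
    (μ ν A τ : ℝ) (hμ : μ = (1 - a) / (1 + a)) (hν : ν = (1 - b) / (1 + b))
    (hA : A = Real.sqrt ((a + b - 2 * a * b) / (a + b + 2 * a * b)))
    (hτ : τ ∈ Set.Ioo (-(π / 4)) (π / 4))
    (hτs : Real.sin (2 * τ)
      = (ν - μ) / Real.sqrt ((μ + ν - 2 * μ * ν) * (2 - μ - ν)))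
    (z : ℂ) (hz : z = Complex.I * A * Complex.exp (-(2 * Complex.I * τ)))
    (f : ℝ → ℂ) (hf : f = fun x : ℝ => Complex.exp (-((1 + z) / (1 - z)) * (x : ℂ) ^ 2 / 2)) :
    (∀ n : ℕ, Odd n → hermiteCoeff f n = 0) ∧
    (∃ c₁ c₂ : ℝ, 0 < c₁ ∧ c₁ ≤ c₂ ∧
      ∀ n : ℕ, 2 ≤ n → Even n →
        c₁ * (n : ℝ) ^ (-(1 : ℝ) / 4) * A ^ ((n : ℝ) / 2) ≤
            ‖hermiteCoeff f n‖ ∧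
          ‖hermiteCoeff f n‖ ≤
            c₂ * (n : ℝ) ^ (-(1 : ℝ) / 4) * A ^ ((n : ℝ) / 2)) ∧
    (∀ n : ℕ, A ^ ((n : ℝ) / 2)
      = ((a + b - 2 * a * b) / (a + b + 2 * a * b)) ^ ((n : ℝ) / 4)) :=
  stmt19_general a b ha hb hab A τ hA z hz f hf
end
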